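/- arXiv:2010.12058 — 3 statements merged into one kernel-verified Lean document; each statement's English description precedes it below -/
import Mathlib

section
/- Let X be an m×s real matrix and let Q̄ (m×s) and R̄ (s×s) be matrices satisfying R̄ᵀ R̄ = Xᵀ X + E and Q̄ R̄ = X + D for some matrices E (s×s) and D (m×s). Set F = Xᵀ D + Dᵀ X + Dᵀ D. Then R̄ᵀ (I_s − Q̄ᵀ Q̄) R̄ = E − F. -/
open Matrix

/-- **Key algebraic identity for second-order loss of orthogonality (Section 4.1).**
If `R̄ᵀ R̄ = Xᵀ X + E` and `Q̄ R̄ = X + D`, then with `F = Xᵀ D + Dᵀ X + Dᵀ D` we have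
`R̄ᵀ (I - Q̄ᵀ Q̄) R̄ = E - F`. -/
theorem loss_of_orthogonality_identity (m s : ℕ)
    (X Qbar D : Matrix (Fin m) (Fin s) ℝ)
    (Rbar E : Matrix (Fin s) (Fin s) ℝ)
    (hChol : Rbarᵀ * Rbar = Xᵀ * X + E)
    (hQR : Qbar * Rbar = X + D) :
    Rbarᵀ * (1 - Qbarᵀ * Qbar) * Rbar = E - (Xᵀ * D + Dᵀ * X + Dᵀ * D) := by
  have key : Rbarᵀ * (1 - Qbarᵀ * Qbar) * Rbar
      = Rbarᵀ * Rbar - (Qbar * Rbar)ᵀ * (Qbar * Rbar) := by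
    simp only [transpose_mul, mul_sub, sub_mul, mul_one, Matrix.mul_assoc]
  rw [key, hChol, hQR, transpose_add, Matrix.add_mul, Matrix.mul_add, Matrix.mul_add]
  noncomm_ring
end

section
/- Let X be an m×s real matrix and let Q̄ (m×s) and R̄ (s×s) be matrices with R̄ invertible, satisfying R̄ᵀ R̄ = Xᵀ X + E and Q̄ R̄ = X + D for some matrices E and D. Set F = Xᵀ D + Dᵀ X + Dᵀ D. Then I_s − Q̄ᵀ Q̄ = R̄⁻ᵀ (E − F) R̄⁻¹, and consequently ‖I_s − Q̄ᵀ Q̄‖₂ ≤ ‖R̄⁻¹‖₂² · (‖E‖₂ + ‖F‖₂). -/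
open Matrix
open scoped Matrix.Norms.L2Operator

namespace Matrix

variable {m n k α : Type*} [Fintype m] [Fintype n] [DecidableEq n] [CommRing α]

theorem one_sub_transpose_mul_self_eq_of_isUnit (Q : Matrix m n α) {R : Matrix n n α}
    (hR : IsUnit R) :
    1 - Qᵀ * Q = (R⁻¹)ᵀ * (Rᵀ * R - (Q * R)ᵀ * (Q * R)) * R⁻¹ := by
  have hR' : R * R⁻¹ = 1 := mul_nonsing_inv R ((isUnit_iff_isUnit_det R).mp hR)
  have hRT : (R⁻¹)ᵀ * Rᵀ = 1 := by rw [← transpose_mul, hR', transpose_one]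
  simp only [transpose_mul, Matrix.mul_sub, Matrix.sub_mul, ← Matrix.mul_assoc, hRT,
    Matrix.one_mul]
  simp only [Matrix.mul_assoc, hR', Matrix.mul_one]

theorem l2_opNorm_transpose_mul_mul_le [Fintype k] [DecidableEq k] (A : Matrix n k ℝ)
    (M : Matrix n n ℝ) :
    ‖Aᵀ * M * A‖ ≤ ‖A‖ ^ 2 * ‖M‖ := by
  have hT : ‖Aᵀ‖ = ‖A‖ := by
    simpa only [conjTranspose_eq_transpose_of_trivial] using l2_opNorm_conjTranspose A
  calc ‖Aᵀ * M * A‖ ≤ ‖Aᵀ‖ * ‖M‖ * ‖A‖ :=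
        (l2_opNorm_mul _ _).trans (by gcongr; exact l2_opNorm_mul _ _)
    _ = ‖A‖ ^ 2 * ‖M‖ := by rw [hT]; ring

end Matrix

/-- **Second-order loss-of-orthogonality bound (Section 4.1).**
If `R̄` is invertible, `R̄ᵀ R̄ = Xᵀ X + E` and `Q̄ R̄ = X + D`, then with
`F = Xᵀ D + Dᵀ X + Dᵀ D` we have `I - Q̄ᵀ Q̄ = R̄⁻ᵀ (E - F) R̄⁻¹` and
`‖I - Q̄ᵀ Q̄‖₂ ≤ ‖R̄⁻¹‖₂² (‖E‖₂ + ‖F‖₂)`, where `‖·‖` is the spectral norm. -/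
theorem loss_of_orthogonality_bound (m s : ℕ)
    (X Qbar D : Matrix (Fin m) (Fin s) ℝ)
    (Rbar E : Matrix (Fin s) (Fin s) ℝ)
    (hinv : IsUnit Rbar)
    (hChol : Rbarᵀ * Rbar = Xᵀ * X + E)
    (hQR : Qbar * Rbar = X + D) :
    1 - Qbarᵀ * Qbar = (Rbar⁻¹)ᵀ * (E - (Xᵀ * D + Dᵀ * X + Dᵀ * D)) * Rbar⁻¹ ∧
      ‖1 - Qbarᵀ * Qbar‖ ≤ ‖Rbar⁻¹‖ ^ 2 * (‖E‖ + ‖Xᵀ * D + Dᵀ * X + Dᵀ * D‖) := by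
  have hresidual : Rbarᵀ * Rbar - (Qbar * Rbar)ᵀ * (Qbar * Rbar)
      = E - (Xᵀ * D + Dᵀ * X + Dᵀ * D) := by
    rw [hChol, hQR]
    simp only [transpose_add, Matrix.add_mul, Matrix.mul_add]
    abel
  have hidentity : 1 - Qbarᵀ * Qbar
      = (Rbar⁻¹)ᵀ * (E - (Xᵀ * D + Dᵀ * X + Dᵀ * D)) * Rbar⁻¹ := by
    rw [one_sub_transpose_mul_self_eq_of_isUnit Qbar hinv, hresidual]
  refine ⟨hidentity, ?_⟩
  rw [hidentity]
  exact (l2_opNorm_transpose_mul_mul_le _ _).trans (by gcongr; exact norm_sub_le _ _)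
end

section
/- Let X be an m×s real matrix, σ > 0 a real number with ‖X v‖ ≥ σ ‖v‖ for all v ∈ ℝˢ, and let R̄ be an s×s real matrix satisfying R̄ᵀ R̄ = Xᵀ X + E for some s×s matrix E with ‖E‖₂ < σ². Then R̄ is invertible and ‖R̄⁻¹‖₂ ≤ 1 / √(σ² − ‖E‖₂). -/
open Matrix
open scoped Matrix.Norms.L2Operator

/-! For every `v`, `‖R̄ v‖² = vᵀ R̄ᵀ R̄ v = ‖X v‖² + vᵀ E v ≥ (σ² - ‖E‖₂) ‖v‖²`, so `R̄` is bounded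
below by `c = √(σ² - ‖E‖₂) > 0`. A square matrix bounded below by `c > 0` is injective, hence
invertible, and `‖R̄⁻¹ w‖ ≤ c⁻¹ ‖R̄ R̄⁻¹ w‖ = c⁻¹ ‖w‖`. -/

namespace Matrix

variable {m n 𝕜 : Type*} [Fintype m] [Fintype n]

lemma norm_mulVec_sq_eq_dotProduct_transpose_mul_self (A : Matrix m n ℝ)
    (v : EuclideanSpace ℝ n) :
    ‖(EuclideanSpace.equiv m ℝ).symm (A *ᵥ v)‖ ^ 2 = v ⬝ᵥ (Aᵀ * A) *ᵥ v := by
  rw [← real_inner_self_eq_norm_sq, ← mulVec_mulVec, dotProduct_mulVec, vecMul_transpose]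
  exact EuclideanSpace.inner_toLp_toLp _ _

variable [DecidableEq n]

lemma abs_dotProduct_mulVec_le (E : Matrix n n ℝ) (v : EuclideanSpace ℝ n) :
    |v ⬝ᵥ E *ᵥ v| ≤ ‖E‖ * ‖v‖ ^ 2 := by
  rw [← inner_toEuclideanCLM, ← l2_opNorm_toEuclideanCLM]
  calc |inner ℝ v (toEuclideanCLM (𝕜 := ℝ) E v)| ≤ ‖v‖ * ‖toEuclideanCLM (𝕜 := ℝ) E v‖ :=
        abs_real_inner_le_norm _ _
    _ ≤ ‖v‖ * (‖toEuclideanCLM (𝕜 := ℝ) E‖ * ‖v‖) := by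
        gcongr
        exact ContinuousLinearMap.le_opNorm _ _
    _ = _ := by ring

lemma mul_norm_sq_le_norm_mulVec_sq {X : Matrix m n ℝ} {R E : Matrix n n ℝ} {σ : ℝ}
    (hσ : 0 ≤ σ)
    (hX : ∀ v : EuclideanSpace ℝ n, σ * ‖v‖ ≤ ‖(EuclideanSpace.equiv m ℝ).symm (X *ᵥ v)‖)
    (hRE : Rᵀ * R = Xᵀ * X + E) (v : EuclideanSpace ℝ n) :
    (σ ^ 2 - ‖E‖) * ‖v‖ ^ 2 ≤ ‖(EuclideanSpace.equiv n ℝ).symm (R *ᵥ v)‖ ^ 2 := by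
  have hXv : (σ * ‖v‖) ^ 2 ≤ ‖(EuclideanSpace.equiv m ℝ).symm (X *ᵥ v)‖ ^ 2 := by
    gcongr
    exact hX v
  calc (σ ^ 2 - ‖E‖) * ‖v‖ ^ 2 = (σ * ‖v‖) ^ 2 - ‖E‖ * ‖v‖ ^ 2 := by ring
    _ ≤ ‖(EuclideanSpace.equiv m ℝ).symm (X *ᵥ v)‖ ^ 2 + v ⬝ᵥ E *ᵥ v := by
        linarith [neg_abs_le (v ⬝ᵥ E *ᵥ v), abs_dotProduct_mulVec_le E v]
    _ = ‖(EuclideanSpace.equiv n ℝ).symm (R *ᵥ v)‖ ^ 2 := by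
        rw [norm_mulVec_sq_eq_dotProduct_transpose_mul_self,
          norm_mulVec_sq_eq_dotProduct_transpose_mul_self, hRE, add_mulVec, dotProduct_add]

variable [RCLike 𝕜] {A : Matrix n n 𝕜} {c : ℝ}

lemma isUnit_of_mul_norm_le_norm_mulVec (hc : 0 < c)
    (h : ∀ v : EuclideanSpace 𝕜 n, c * ‖v‖ ≤ ‖(EuclideanSpace.equiv n 𝕜).symm (A *ᵥ v)‖) :
    IsUnit A := by
  refine mulVec_injective_iff_isUnit.mp fun u w huw => ?_
  have hdiff := h (WithLp.toLp 2 (u - w))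
  simp only [mulVec_sub, huw, sub_self, map_zero, norm_zero] at hdiff
  have hnorm : ‖WithLp.toLp 2 (u - w)‖ ≤ 0 := nonpos_of_mul_nonpos_right hdiff hc
  simpa only [WithLp.toLp_sub, norm_le_zero_iff, sub_eq_zero, WithLp.toLp.injEq] using hnorm

lemma l2_opNorm_inv_le_of_mul_norm_le_norm_mulVec (hc : 0 < c)
    (h : ∀ v : EuclideanSpace 𝕜 n, c * ‖v‖ ≤ ‖(EuclideanSpace.equiv n 𝕜).symm (A *ᵥ v)‖) :
    ‖A⁻¹‖ ≤ c⁻¹ := by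
  have hA : A * A⁻¹ = 1 :=
    mul_nonsing_inv A ((isUnit_iff_isUnit_det A).mp (isUnit_of_mul_norm_le_norm_mulVec hc h))
  rw [l2_opNorm_def]
  refine ContinuousLinearMap.opNorm_le_bound _ (inv_nonneg.2 hc.le) fun x => ?_
  rw [le_inv_mul_iff₀ hc]
  show c * ‖WithLp.toLp 2 (A⁻¹ *ᵥ x.ofLp)‖ ≤ ‖x‖
  simpa only [mulVec_mulVec, hA, one_mulVec, PiLp.continuousLinearEquiv_symm_apply,
    WithLp.toLp_ofLp] using h (WithLp.toLp 2 (A⁻¹ *ᵥ x))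

end Matrix

/-- **Weyl-type bound on `‖R̄⁻¹‖₂` (equation (4.6)).**
If `σ > 0` is a lower bound on the smallest singular value of `X`
(`‖X v‖ ≥ σ ‖v‖` for all `v`), `R̄ᵀ R̄ = Xᵀ X + E`, and `‖E‖₂ < σ²`, then `R̄` is
invertible and `‖R̄⁻¹‖₂ ≤ 1 / √(σ² - ‖E‖₂)`. -/
theorem weyl_type_inverse_bound (m s : ℕ)
    (X : Matrix (Fin m) (Fin s) ℝ)
    (Rbar E : Matrix (Fin s) (Fin s) ℝ)
    (σ : ℝ) (hσ : 0 < σ)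
    (hX : ∀ v : EuclideanSpace ℝ (Fin s),
      σ * ‖v‖ ≤ ‖(EuclideanSpace.equiv (Fin m) ℝ).symm (X *ᵥ v)‖)
    (hChol : Rbarᵀ * Rbar = Xᵀ * X + E)
    (hE : ‖E‖ < σ ^ 2) :
    IsUnit Rbar ∧ ‖Rbar⁻¹‖ ≤ 1 / Real.sqrt (σ ^ 2 - ‖E‖) := by
  have hc : 0 < σ ^ 2 - ‖E‖ := sub_pos.2 hE
  have hR : ∀ v : EuclideanSpace ℝ (Fin s),
      √(σ ^ 2 - ‖E‖) * ‖v‖ ≤ ‖(EuclideanSpace.equiv (Fin s) ℝ).symm (Rbar *ᵥ v)‖ := by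
    intro v
    refine (pow_le_pow_iff_left₀ (by positivity) (norm_nonneg _) two_ne_zero).mp ?_
    rw [mul_pow, Real.sq_sqrt hc.le]
    exact mul_norm_sq_le_norm_mulVec_sq hσ.le hX hChol v
  have hc' : 0 < √(σ ^ 2 - ‖E‖) := Real.sqrt_pos.2 hc
  exact ⟨isUnit_of_mul_norm_le_norm_mulVec hc' hR,
    one_div (√(σ ^ 2 - ‖E‖)) ▸ l2_opNorm_inv_le_of_mul_norm_le_norm_mulVec hc' hR⟩
end
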